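/- Let G be a simple connected non-bipartite graph, P its normalized adjacency matrix with eigenpair (λ, v), Pv = λv. Define for each sign ε ∈ {+,−} the vector w_ε on R_q(G) whose restriction to old nodes is v and whose entries on each of the q copies of new nodes equal (√(2(q+1))/(λ + ε√Δ))·Bᵀ D^{-1/2} v, where Δ = λ² + 2q(q+1)(1+λ). Then w_ε is an eigenvector of the normalized adjacency matrix P̃ of R_q(G) with eigenvalue (λ + ε√Δ)/(2(q+1)). -/

import Mathlib

open scoped Classical

/-- The `q`-triangulation graph `R_q(G)`: for each edge `e` of `G` we add `q` new
nodes (indexed by `G.edgeSet × Fin q`), each adjacent exactly to the two endpoints of `e`. -/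
noncomputable def qTriangulation {V : Type} (G : SimpleGraph V) (q : ℕ) :
    SimpleGraph (V ⊕ (G.edgeSet × Fin q)) where
  Adj x y :=
    match x, y with
    | Sum.inl a, Sum.inl b => G.Adj a b
    | Sum.inl a, Sum.inr p => a ∈ (p.1 : Sym2 V)
    | Sum.inr p, Sum.inl b => b ∈ (p.1 : Sym2 V)
    | Sum.inr _, Sum.inr _ => False
  symm := by
    constructor
    rintro (a | p) (b | p') h
    · exact h.symm
    · exact h
    · exact h
    · exact h.elim
  loopless := by
    constructor
    rintro (a | p) h
    · exact G.loopless.irrefl a h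
    · exact h

/-- The normalized adjacency matrix `P = D^{-1/2} A D^{-1/2}` of a graph. -/
noncomputable def normAdj {V : Type} [Fintype V] (G : SimpleGraph V) : Matrix V V ℝ :=
  Matrix.of fun i j => (G.adjMatrix ℝ) i j / Real.sqrt ((G.degree i : ℝ) * (G.degree j : ℝ))

section Helpers

set_option linter.unusedSectionVars false

variable {V : Type} [Fintype V] [DecidableEq V] (G : SimpleGraph V)

lemma myExistsAdj (hnb : ¬ G.Colorable 2) : ∃ x y, G.Adj x y := by
  by_contra h
  push_neg at h
  exact hnb ⟨SimpleGraph.Coloring.mk (fun _ => 0) (fun {a b} hab => absurd hab (h a b))⟩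

lemma myDegPos (hG : G.Connected) (hnb : ¬ G.Colorable 2) (a : V) : 0 < G.degree a := by
  rw [SimpleGraph.degree_pos_iff_exists_adj]
  obtain ⟨x, y, hxy⟩ := myExistsAdj G hnb
  rcases eq_or_ne a x with rfl | hax
  · exact ⟨y, hxy⟩
  · obtain ⟨p⟩ := hG.preconnected a x
    have hnil : ¬ p.Nil := SimpleGraph.Walk.not_nil_of_ne hax
    exact ⟨p.getVert 1, p.adj_snd hnil⟩

lemma myEigen (lam : ℝ) (v : V → ℝ) (hv : Matrix.mulVec (normAdj G) v = lam • v) (a : V) :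
    ∑ j, (G.adjMatrix ℝ) a j / Real.sqrt ((G.degree a : ℝ) * (G.degree j : ℝ)) * v j
      = lam * v a := by
  have := congrFun hv a
  simpa [normAdj, Matrix.mulVec, dotProduct] using this

lemma myEigen2 (hd : ∀ a, 0 < G.degree a) (lam : ℝ) (v : V → ℝ)
    (hv : Matrix.mulVec (normAdj G) v = lam • v) (a : V) :
    ∑ j, (G.adjMatrix ℝ) a j * (v j / Real.sqrt (G.degree j))
      = Real.sqrt (G.degree a) * (lam * v a) := by
  have hda : (0:ℝ) < (G.degree a : ℝ) := by exact_mod_cast hd a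
  have hsa : (0:ℝ) < Real.sqrt (G.degree a) := Real.sqrt_pos.mpr hda
  have h1 := myEigen G lam v hv a
  have h2 : ∀ j, (G.adjMatrix ℝ) a j / Real.sqrt ((G.degree a : ℝ) * (G.degree j : ℝ)) * v j
      = (G.adjMatrix ℝ) a j * (v j / Real.sqrt (G.degree j)) / Real.sqrt (G.degree a) := by
    intro j
    rw [Real.sqrt_mul (by positivity)]
    field_simp
  rw [Finset.sum_congr rfl (fun j _ => h2 j)] at h1
  rw [← Finset.sum_div, div_eq_iff hsa.ne'] at h1
  rw [h1]; ring

lemma mySpectral (hG : G.Connected) (hnb : ¬ G.Colorable 2) (hd : ∀ a, 0 < G.degree a)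
    (lam : ℝ) (v : V → ℝ) (hv : Matrix.mulVec (normAdj G) v = lam • v) (hvne : v ≠ 0) :
    -1 < lam := by
  set u : V → ℝ := fun i => v i / Real.sqrt (G.degree i) with hu
  have hdR : ∀ a, (0:ℝ) < (G.degree a : ℝ) := fun a => by exact_mod_cast hd a
  have hs : ∀ a, (0:ℝ) < Real.sqrt (G.degree a) := fun a => Real.sqrt_pos.mpr (hdR a)
  have hrow : ∀ a, ∑ j, (G.adjMatrix ℝ) a j = (G.degree a : ℝ) := fun a => by
    have := SimpleGraph.adjMatrix_mulVec_const_apply (G := G) (α := ℝ) (a := (1:ℝ)) (v := a)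
    simpa [Matrix.mulVec, dotProduct] using this
  have hU2 : ∀ i, (G.degree i : ℝ) * (u i)^2 = (v i)^2 := by
    intro i
    rw [hu]
    rw [div_pow, Real.sq_sqrt (hdR i).le, mul_div_cancel₀ _ (hdR i).ne']
  have hAsymm : ∀ i j, (G.adjMatrix ℝ) i j = (G.adjMatrix ℝ) j i := by
    intro i j; simp [SimpleGraph.adjMatrix_apply, G.adj_comm]
  have hinner := fun i => myEigen2 G hd lam v hv i
  have T1 : ∑ i, ∑ j, (G.adjMatrix ℝ) i j * (u i)^2 = ∑ i, (v i)^2 := by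
    refine Finset.sum_congr rfl fun i _ => ?_
    rw [← Finset.sum_mul, hrow, hU2]
  have T3 : ∑ i, ∑ j, (G.adjMatrix ℝ) i j * (u j)^2 = ∑ i, (v i)^2 := by
    rw [Finset.sum_comm]
    refine Finset.sum_congr rfl fun j _ => ?_
    rw [Finset.sum_congr rfl fun i _ => by rw [hAsymm i j], ← Finset.sum_mul, hrow, hU2]
  have T2 : ∑ i, ∑ j, (G.adjMatrix ℝ) i j * (u i * u j) = lam * ∑ i, (v i)^2 := by
    rw [Finset.mul_sum]
    refine Finset.sum_congr rfl fun i _ => ?_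
    have h1 : ∑ j, (G.adjMatrix ℝ) i j * (u i * u j)
        = u i * ∑ j, (G.adjMatrix ℝ) i j * u j := by
      rw [Finset.mul_sum]; exact Finset.sum_congr rfl fun j _ => by ring
    rw [h1, hinner i, hu]
    have hsi := (hs i).ne'
    field_simp
  have hQ : ∑ i, ∑ j, (G.adjMatrix ℝ) i j * (u i + u j)^2 = 2*(1+lam)*∑ i, (v i)^2 := by
    have expand : ∀ i j, (G.adjMatrix ℝ) i j * (u i + u j)^2
        = (G.adjMatrix ℝ) i j * (u i)^2 + 2*((G.adjMatrix ℝ) i j * (u i * u j))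
          + (G.adjMatrix ℝ) i j * (u j)^2 := fun i j => by ring
    calc ∑ i, ∑ j, (G.adjMatrix ℝ) i j * (u i + u j)^2
        = ∑ i, ∑ j, ((G.adjMatrix ℝ) i j * (u i)^2 + 2*((G.adjMatrix ℝ) i j * (u i * u j))
          + (G.adjMatrix ℝ) i j * (u j)^2) :=
          Finset.sum_congr rfl fun i _ => Finset.sum_congr rfl fun j _ => expand i j
      _ = (∑ i, ∑ j, (G.adjMatrix ℝ) i j * (u i)^2)
          + 2 * (∑ i, ∑ j, (G.adjMatrix ℝ) i j * (u i * u j))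
          + (∑ i, ∑ j, (G.adjMatrix ℝ) i j * (u j)^2) := by
          simp [Finset.sum_add_distrib, Finset.mul_sum]
      _ = 2*(1+lam)*∑ i, (v i)^2 := by rw [T1, T2, T3]; ring
  have hterm_nn : ∀ i j, 0 ≤ (G.adjMatrix ℝ) i j * (u i + u j)^2 := by
    intro i j
    apply mul_nonneg _ (sq_nonneg _)
    simp only [SimpleGraph.adjMatrix_apply]
    split <;> norm_num
  have hQnn : 0 ≤ ∑ i, ∑ j, (G.adjMatrix ℝ) i j * (u i + u j)^2 :=
    Finset.sum_nonneg fun i _ => Finset.sum_nonneg fun j _ => hterm_nn i j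
  obtain ⟨a, ha⟩ := Function.ne_iff.mp hvne
  have hv2 : 0 < ∑ i, (v i)^2 :=
    Finset.sum_pos' (fun i _ => sq_nonneg (v i))
      ⟨a, Finset.mem_univ a, lt_of_le_of_ne (sq_nonneg _) (Ne.symm (pow_ne_zero 2 ha))⟩
  have hge : -1 ≤ lam := by nlinarith
  rcases eq_or_lt_of_le hge with heq | hlt
  · exfalso
    have hlam : lam = -1 := heq.symm
    have hQ0 : ∑ i, ∑ j, (G.adjMatrix ℝ) i j * (u i + u j)^2 = 0 := by
      rw [hQ, hlam]; ring
    have hz1 := (Finset.sum_eq_zero_iff_of_nonneg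
      (fun i _ => Finset.sum_nonneg fun j _ => hterm_nn i j)).mp hQ0
    have hopp : ∀ i j, G.Adj i j → u j = -u i := by
      intro i j hij
      have hz2 := (Finset.sum_eq_zero_iff_of_nonneg
        (fun j _ => hterm_nn i j)).mp (hz1 i (Finset.mem_univ i)) j (Finset.mem_univ j)
      rw [SimpleGraph.adjMatrix_apply, if_pos hij, one_mul] at hz2
      have := pow_eq_zero_iff (n := 2) (by norm_num) |>.mp hz2
      linarith
    have habs : ∀ i j, G.Adj i j → |u i| = |u j| := fun i j h => by
      rw [hopp i j h, abs_neg]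
    have hwalk : ∀ i j, ∀ _ : G.Walk i j, |u i| = |u j| := by
      intro i j p
      induction p with
      | nil => rfl
      | cons h p ih => exact (habs _ _ h).trans ih
    have hua : u a ≠ 0 := div_ne_zero ha (hs a).ne'
    have hall : ∀ i, u i ≠ 0 := by
      intro i h0
      obtain ⟨p⟩ := hG.preconnected a i
      have := hwalk a i p
      rw [h0, abs_zero] at this
      exact hua (abs_eq_zero.mp this)
    apply hnb
    refine ⟨SimpleGraph.Coloring.mk (fun i => if 0 < u i then (0 : Fin 2) else 1) ?_⟩
    intro x y hxy
    have hyx : u y = -u x := hopp x y hxy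
    rcases (hall x).lt_or_gt with hneg | hpos
    · have h1 : 0 < u y := by rw [hyx]; linarith
      simp [h1, not_lt.mpr hneg.le]
    · have h1 : ¬ 0 < u y := by rw [hyx]; linarith
      simp [h1, hpos]
  · exact hlt

lemma mySumEdge (a : V) :
    ∑ e : G.edgeSet, (if a ∈ (e : Sym2 V) then (1:ℕ) else 0) = G.degree a := by
  rw [Finset.sum_set_coe (f := fun e => if a ∈ (e : Sym2 V) then (1:ℕ) else 0)]
  rw [Finset.sum_boole]
  have h : G.edgeSet.toFinset.filter (fun e => a ∈ e) = G.incidenceFinset a := by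
    ext e
    simp [SimpleGraph.mem_incidenceFinset, SimpleGraph.incidenceSet, Set.mem_toFinset]
  rw [h, SimpleGraph.card_incidenceFinset_eq_degree]
  simp

lemma myAdjInlInl (q : ℕ) (a b : V) :
    (qTriangulation G q).Adj (Sum.inl a) (Sum.inl b) ↔ G.Adj a b := Iff.rfl

lemma myAdjInlInr (q : ℕ) (a : V) (p : G.edgeSet × Fin q) :
    (qTriangulation G q).Adj (Sum.inl a) (Sum.inr p) ↔ a ∈ (p.1 : Sym2 V) := Iff.rfl

lemma myAdjInrInl (q : ℕ) (b : V) (p : G.edgeSet × Fin q) :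
    (qTriangulation G q).Adj (Sum.inr p) (Sum.inl b) ↔ b ∈ (p.1 : Sym2 V) := Iff.rfl

lemma myAdjInrInr (q : ℕ) (p p' : G.edgeSet × Fin q) :
    ¬ (qTriangulation G q).Adj (Sum.inr p) (Sum.inr p') := fun h => h

lemma myDegSum (q : ℕ) (x : V ⊕ (G.edgeSet × Fin q)) :
    (qTriangulation G q).degree x = ∑ y, if (qTriangulation G q).Adj x y then 1 else 0 := by
  rw [SimpleGraph.degree, SimpleGraph.neighborFinset_eq_filter, Finset.sum_boole]
  simp

lemma myDegInl (q : ℕ) (a : V) :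
    (qTriangulation G q).degree (Sum.inl a) = (q+1) * G.degree a := by
  rw [myDegSum, Fintype.sum_sum_type]
  have h1 : ∑ b : V, (if (qTriangulation G q).Adj (Sum.inl a) (Sum.inl b) then 1 else 0)
      = G.degree a := by
    simp only [myAdjInlInl]
    rw [Finset.sum_boole, ← SimpleGraph.neighborFinset_eq_filter, SimpleGraph.degree]
    simp
  have h2 : ∑ p : G.edgeSet × Fin q,
      (if (qTriangulation G q).Adj (Sum.inl a) (Sum.inr p) then 1 else 0) = q * G.degree a := by
    simp only [myAdjInlInr]
    rw [Fintype.sum_prod_type]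
    have h3 : ∀ e : G.edgeSet, ∑ _k : Fin q, (if a ∈ (e : Sym2 V) then 1 else 0)
        = q * (if a ∈ (e : Sym2 V) then 1 else 0) := fun e => by
      rw [Finset.sum_const, Finset.card_univ, Fintype.card_fin, smul_eq_mul]
    rw [Finset.sum_congr rfl fun e _ => h3 e, ← Finset.mul_sum, mySumEdge]
  rw [h1, h2]; ring

lemma myDegInr (q : ℕ) (p : G.edgeSet × Fin q) :
    (qTriangulation G q).degree (Sum.inr p) = 2 := by
  rw [myDegSum, Fintype.sum_sum_type]
  have h2 : ∑ p' : G.edgeSet × Fin q,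
      (if (qTriangulation G q).Adj (Sum.inr p) (Sum.inr p') then 1 else 0) = 0 := by
    simp [myAdjInrInr]
  have h1 : ∑ b : V, (if (qTriangulation G q).Adj (Sum.inr p) (Sum.inl b) then 1 else 0)
      = 2 := by
    simp only [myAdjInrInl]
    have h := SimpleGraph.sum_incMatrix_apply_of_mem_edgeSet (R := ℕ) (G := G) p.1.2
    rw [← h]
    refine Finset.sum_congr rfl fun b _ => ?_
    rw [SimpleGraph.incMatrix_apply']
    congr 1
    simp only [SimpleGraph.incidenceSet, Set.mem_sep_iff, eq_iff_iff]
    exact ⟨fun hb => ⟨p.1.2, hb⟩, fun hb => hb.2⟩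
  rw [h1, h2]

lemma myIncEq (a : V) (e : G.edgeSet) :
    (if a ∈ (e : Sym2 V) then (1:ℝ) else 0) = G.incMatrix ℝ a (e : Sym2 V) := by
  rw [SimpleGraph.incMatrix_apply']
  congr 1
  simp only [SimpleGraph.incidenceSet, Set.mem_sep_iff, eq_iff_iff]
  exact ⟨fun h => ⟨e.2, h⟩, fun h => h.2⟩

lemma myBBT (a i : V) :
    ∑ e : G.edgeSet, G.incMatrix ℝ a (e : Sym2 V) * G.incMatrix ℝ i (e : Sym2 V)
      = if a = i then (G.degree a : ℝ) else (G.adjMatrix ℝ) a i := by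
  rw [Finset.sum_set_coe (f := fun e => G.incMatrix ℝ a e * G.incMatrix ℝ i e)]
  have hext : ∑ e ∈ G.edgeSet.toFinset, G.incMatrix ℝ a e * G.incMatrix ℝ i e
      = ∑ e : Sym2 V, G.incMatrix ℝ a e * G.incMatrix ℝ i e := by
    apply Finset.sum_subset (Finset.subset_univ _)
    intro e _ he
    rw [SimpleGraph.incMatrix_of_notMem_incidenceSet, zero_mul]
    intro hmem; exact he (Set.mem_toFinset.mpr hmem.1)
  rw [hext]
  have h := congrFun (congrFun (SimpleGraph.incMatrix_mul_transpose (R := ℝ) (G := G)) a) i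
  rw [Matrix.mul_apply] at h
  simp only [Matrix.transpose_apply] at h
  rw [h, SimpleGraph.adjMatrix_apply]
  rfl

lemma myAMInlInl (q : ℕ) (a b : V) :
    (qTriangulation G q).adjMatrix ℝ (Sum.inl a) (Sum.inl b) = (G.adjMatrix ℝ) a b := by
  by_cases h : G.Adj a b
  · rw [SimpleGraph.adjMatrix_apply, SimpleGraph.adjMatrix_apply,
      if_pos ((myAdjInlInl G q a b).mpr h), if_pos h]
  · rw [SimpleGraph.adjMatrix_apply, SimpleGraph.adjMatrix_apply,
      if_neg (fun hc => h ((myAdjInlInl G q a b).mp hc)), if_neg h]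

lemma myAMInlInr (q : ℕ) (a : V) (p : G.edgeSet × Fin q) :
    (qTriangulation G q).adjMatrix ℝ (Sum.inl a) (Sum.inr p)
      = G.incMatrix ℝ a (p.1 : Sym2 V) := by
  rw [← myIncEq]
  by_cases h : a ∈ (p.1 : Sym2 V)
  · rw [SimpleGraph.adjMatrix_apply, if_pos ((myAdjInlInr G q a p).mpr h), if_pos h]
  · rw [SimpleGraph.adjMatrix_apply,
      if_neg (fun hc => h ((myAdjInlInr G q a p).mp hc)), if_neg h]

lemma myAMInrInl (q : ℕ) (b : V) (p : G.edgeSet × Fin q) :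
    (qTriangulation G q).adjMatrix ℝ (Sum.inr p) (Sum.inl b)
      = G.incMatrix ℝ b (p.1 : Sym2 V) := by
  rw [← myIncEq]
  by_cases h : b ∈ (p.1 : Sym2 V)
  · rw [SimpleGraph.adjMatrix_apply, if_pos ((myAdjInrInl G q b p).mpr h), if_pos h]
  · rw [SimpleGraph.adjMatrix_apply,
      if_neg (fun hc => h ((myAdjInrInl G q b p).mp hc)), if_neg h]

lemma myAMInrInr (q : ℕ) (p p' : G.edgeSet × Fin q) :
    (qTriangulation G q).adjMatrix ℝ (Sum.inr p) (Sum.inr p') = 0 := by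
  rw [SimpleGraph.adjMatrix_apply, if_neg (myAdjInrInr G q p p')]

/-- Key identity: `B (Bᵀ D^{-1/2} v)` restricted at `a` equals `(1+λ)√(d_a) v_a`. -/
lemma myL3 (hd : ∀ a, 0 < G.degree a) (lam : ℝ) (v : V → ℝ)
    (hv : Matrix.mulVec (normAdj G) v = lam • v) (a : V) :
    ∑ e : G.edgeSet, G.incMatrix ℝ a (e : Sym2 V)
        * (∑ i, G.incMatrix ℝ i (e : Sym2 V) * v i / Real.sqrt (G.degree i))
      = (1+lam) * (Real.sqrt (G.degree a) * v a) := by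
  have hdR : ∀ b, (0:ℝ) < (G.degree b : ℝ) := fun b => by exact_mod_cast hd b
  have hsa : (0:ℝ) < Real.sqrt (G.degree a) := Real.sqrt_pos.mpr (hdR a)
  have step1 : ∑ e : G.edgeSet, G.incMatrix ℝ a (e : Sym2 V)
        * (∑ i, G.incMatrix ℝ i (e : Sym2 V) * v i / Real.sqrt (G.degree i))
      = ∑ i, (∑ e : G.edgeSet, G.incMatrix ℝ a (e : Sym2 V) * G.incMatrix ℝ i (e : Sym2 V))
          * (v i / Real.sqrt (G.degree i)) := by
    simp_rw [Finset.mul_sum, Finset.sum_mul]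
    rw [Finset.sum_comm]
    refine Finset.sum_congr rfl fun i _ => Finset.sum_congr rfl fun e _ => by ring
  rw [step1]
  have step2 : ∀ i, (∑ e : G.edgeSet, G.incMatrix ℝ a (e : Sym2 V) * G.incMatrix ℝ i (e : Sym2 V))
      = (G.adjMatrix ℝ) a i + (if a = i then (G.degree a : ℝ) else 0) := by
    intro i
    rw [myBBT]
    by_cases h : a = i
    · subst h; simp [SimpleGraph.adjMatrix_apply]
    · simp [h]
  simp_rw [step2, add_mul, Finset.sum_add_distrib]
  have step3 : ∑ i, (if a = i then (G.degree a : ℝ) else 0) * (v i / Real.sqrt (G.degree i))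
      = Real.sqrt (G.degree a) * v a := by
    simp only [ite_mul, zero_mul]
    rw [Finset.sum_ite_eq]
    simp only [Finset.mem_univ, if_true]
    have h4 : (G.degree a : ℝ) * (v a / Real.sqrt (G.degree a))
        = ((G.degree a : ℝ) / Real.sqrt (G.degree a)) * v a := by ring
    rw [h4, Real.div_sqrt]
  rw [step3, myEigen2 G hd lam v hv a]
  ring

end Helpers

set_option maxHeartbeats 2000000

/-- If `G` is connected and non-bipartite and `(λ, v)` is an eigenpair of
its normalized adjacency matrix `P`, then for each sign `ε` the vector `w` that restricts to
`v` on old nodes and equals `(√(2(q+1))/(λ + ε√Δ))·(Bᵀ D^{-1/2} v)` on each new node is an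
eigenvector of the normalized adjacency matrix of `R_q(G)` with eigenvalue
`(λ + ε√Δ)/(2(q+1))`, where `Δ = λ² + 2q(q+1)(1+λ)`. -/
theorem qTriangulation_eigenvector {V : Type} [Fintype V] [DecidableEq V]
    (G : SimpleGraph V) (hG : G.Connected) (hnb : ¬ G.Colorable 2)
    (q : ℕ) (hq : 0 < q) (lam : ℝ) (v : V → ℝ)
    (hv : Matrix.mulVec (normAdj G) v = lam • v)
    (ε : ℝ) (hε : ε = 1 ∨ ε = -1)
    (Δ : ℝ) (hΔ : Δ = lam ^ 2 + 2 * (q : ℝ) * ((q : ℝ) + 1) * (1 + lam))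
    (w : (V ⊕ (G.edgeSet × Fin q)) → ℝ)
    (hw1 : ∀ a : V, w (Sum.inl a) = v a)
    (hw2 : ∀ p : G.edgeSet × Fin q, w (Sum.inr p)
      = (Real.sqrt (2 * ((q : ℝ) + 1)) / (lam + ε * Real.sqrt Δ)) *
          ∑ i : V, G.incMatrix ℝ i (p.1 : Sym2 V) * v i / Real.sqrt (G.degree i)) :
    Matrix.mulVec (normAdj (qTriangulation G q)) w
      = ((lam + ε * Real.sqrt Δ) / (2 * ((q : ℝ) + 1))) • w := by
  classical
  by_cases hvz : v = 0
  · have hw0 : w = 0 := by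
      funext x
      rcases x with a | p
      · rw [hw1]; simp [hvz]
      · rw [hw2]; simp [hvz]
    rw [hw0, Matrix.mulVec_zero, smul_zero]
  have hd : ∀ a, 0 < G.degree a := myDegPos G hG hnb
  have hdR : ∀ a, (0:ℝ) < (G.degree a : ℝ) := fun a => by exact_mod_cast hd a
  have hsp : ∀ a, (0:ℝ) < Real.sqrt (G.degree a) := fun a => Real.sqrt_pos.mpr (hdR a)
  have hlam : -1 < lam := mySpectral G hG hnb hd lam v hv hvz
  have hqR : (0:ℝ) < (q:ℝ) := by exact_mod_cast hq
  have hpos : (0:ℝ) < 2*(q:ℝ)*((q:ℝ)+1)*(1+lam) :=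
    mul_pos (mul_pos (mul_pos two_pos hqR) (by linarith)) (by linarith)
  have hΔpos : 0 < Δ := by rw [hΔ]; nlinarith [sq_nonneg lam, hpos]
  have hS2 : (Real.sqrt Δ)^2 = Δ := Real.sq_sqrt hΔpos.le
  have hSnn : 0 ≤ Real.sqrt Δ := Real.sqrt_nonneg _
  have hSgt : |lam| < Real.sqrt Δ := by
    rw [← Real.sqrt_sq_eq_abs]
    apply Real.sqrt_lt_sqrt (sq_nonneg _)
    rw [hΔ]; nlinarith [hpos]
  have hε2 : ε^2 = 1 := by rcases hε with rfl|rfl <;> norm_num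
  obtain ⟨s, hsdef⟩ : ∃ x : ℝ, x = lam + ε * Real.sqrt Δ := ⟨_, rfl⟩
  have hsne : s ≠ 0 := by
    intro h0
    have h1 : lam = -(ε * Real.sqrt Δ) := by rw [hsdef] at h0; linarith
    have h2 : |lam| = Real.sqrt Δ := by
      rw [h1, abs_neg, abs_mul]
      rcases hε with rfl|rfl <;> simp [abs_of_nonneg hSnn]
    linarith [hSgt, abs_nonneg lam]
  have hkey : s^2 = 2*lam*s + 2*(q:ℝ)*((q:ℝ)+1)*(1+lam) := by
    rw [hsdef]
    linear_combination (Real.sqrt Δ)^2 * hε2 + hS2 + hΔ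
  simp only [← hsdef] at hw2 ⊢
  have hq1 : (0:ℝ) < (q:ℝ)+1 := by positivity
  have ht : (0:ℝ) < 2*((q:ℝ)+1) := by positivity
  have hst : (0:ℝ) < Real.sqrt (2*((q:ℝ)+1)) := Real.sqrt_pos.mpr ht
  have hstsq : Real.sqrt (2*((q:ℝ)+1)) * Real.sqrt (2*((q:ℝ)+1)) = 2*((q:ℝ)+1) :=
    Real.mul_self_sqrt ht.le
  have hDl : ∀ a : V, (((qTriangulation G q).degree (Sum.inl a) : ℕ) : ℝ)
      = ((q:ℝ)+1) * (G.degree a : ℝ) := by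
    intro a; rw [myDegInl]; push_cast; ring
  have hDr : ∀ p : G.edgeSet × Fin q, (((qTriangulation G q).degree (Sum.inr p) : ℕ) : ℝ)
      = 2 := by
    intro p; rw [myDegInr]; norm_num
  funext x
  rw [Pi.smul_apply, smul_eq_mul]
  have hmv : Matrix.mulVec (normAdj (qTriangulation G q)) w x
      = ∑ y, (qTriangulation G q).adjMatrix ℝ x y
          / Real.sqrt (((qTriangulation G q).degree x : ℝ)
            * ((qTriangulation G q).degree y : ℝ)) * w y := rfl
  rw [hmv]
  rcases x with a | p
  · -- old node
    rw [hw1, Fintype.sum_sum_type]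
    have hT1 : ∑ b : V, (qTriangulation G q).adjMatrix ℝ (Sum.inl a) (Sum.inl b)
          / Real.sqrt (((qTriangulation G q).degree (Sum.inl a) : ℝ)
            * ((qTriangulation G q).degree (Sum.inl b) : ℝ)) * w (Sum.inl b)
        = lam * v a / ((q:ℝ)+1) := by
      have hpt : ∀ b : V, (qTriangulation G q).adjMatrix ℝ (Sum.inl a) (Sum.inl b)
          / Real.sqrt (((qTriangulation G q).degree (Sum.inl a) : ℝ)
            * ((qTriangulation G q).degree (Sum.inl b) : ℝ)) * w (Sum.inl b)
          = ((G.adjMatrix ℝ) a b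
            / Real.sqrt ((G.degree a : ℝ) * (G.degree b : ℝ)) * v b) / ((q:ℝ)+1) := by
        intro b
        rw [hw1, hDl, hDl, myAMInlInl]
        have h1 : ((q:ℝ)+1) * (G.degree a : ℝ) * (((q:ℝ)+1) * (G.degree b : ℝ))
            = (((q:ℝ)+1))^2 * ((G.degree a : ℝ) * (G.degree b : ℝ)) := by ring
        rw [h1, Real.sqrt_mul (sq_nonneg _), Real.sqrt_sq hq1.le]
        rw [div_mul_eq_mul_div, div_mul_eq_mul_div, div_div, mul_comm (((q:ℝ)+1))]
      rw [Finset.sum_congr rfl fun b _ => hpt b, ← Finset.sum_div, myEigen G lam v hv a]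
    have hT2 : ∑ p : G.edgeSet × Fin q,
          (qTriangulation G q).adjMatrix ℝ (Sum.inl a) (Sum.inr p)
          / Real.sqrt (((qTriangulation G q).degree (Sum.inl a) : ℝ)
            * ((qTriangulation G q).degree (Sum.inr p) : ℝ)) * w (Sum.inr p)
        = (q:ℝ) * ((1+lam) * v a) / s := by
      have hpt : ∀ p : G.edgeSet × Fin q,
          (qTriangulation G q).adjMatrix ℝ (Sum.inl a) (Sum.inr p)
          / Real.sqrt (((qTriangulation G q).degree (Sum.inl a) : ℝ)
            * ((qTriangulation G q).degree (Sum.inr p) : ℝ)) * w (Sum.inr p)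
          = (Real.sqrt (2*((q:ℝ)+1)) / (s * (Real.sqrt (2*((q:ℝ)+1))
              * Real.sqrt (G.degree a)))) * (G.incMatrix ℝ a (p.1 : Sym2 V)
              * (∑ i, G.incMatrix ℝ i (p.1 : Sym2 V) * v i / Real.sqrt (G.degree i))) := by
        intro p
        rw [hw2, hDl, hDr, myAMInlInr]
        have h1 : ((q:ℝ)+1) * (G.degree a : ℝ) * 2
            = (2*((q:ℝ)+1)) * (G.degree a : ℝ) := by ring
        rw [h1, Real.sqrt_mul ht.le]
        have hsa := (hsp a).ne'
        field_simp
      rw [Finset.sum_congr rfl fun p _ => hpt p, ← Finset.mul_sum]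
      rw [Fintype.sum_prod_type]
      have hconst : ∀ e : G.edgeSet, ∑ _k : Fin q, (G.incMatrix ℝ a (e : Sym2 V)
            * (∑ i, G.incMatrix ℝ i (e : Sym2 V) * v i / Real.sqrt (G.degree i)))
          = (q:ℝ) * (G.incMatrix ℝ a (e : Sym2 V)
            * (∑ i, G.incMatrix ℝ i (e : Sym2 V) * v i / Real.sqrt (G.degree i))) := by
        intro e
        rw [Finset.sum_const, Finset.card_univ, Fintype.card_fin, nsmul_eq_mul]
      rw [Finset.sum_congr rfl fun e _ => hconst e, ← Finset.mul_sum,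
        myL3 G hd lam v hv a]
      have hsa := (hsp a).ne'
      field_simp
    rw [hT1, hT2]
    have hscal : lam / ((q:ℝ)+1) + (q:ℝ) * (1+lam) / s = s / (2*((q:ℝ)+1)) := by
      field_simp
      linear_combination (-1:ℝ) * hkey
    have hfactor : lam * v a / ((q:ℝ)+1) + (q:ℝ) * ((1+lam) * v a) / s
        = (lam / ((q:ℝ)+1) + (q:ℝ) * (1+lam) / s) * v a := by ring
    rw [hfactor, hscal]
  · -- new node
    rw [hw2, Fintype.sum_sum_type]
    have hT2 : ∑ p' : G.edgeSet × Fin q,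
          (qTriangulation G q).adjMatrix ℝ (Sum.inr p) (Sum.inr p')
          / Real.sqrt (((qTriangulation G q).degree (Sum.inr p) : ℝ)
            * ((qTriangulation G q).degree (Sum.inr p') : ℝ)) * w (Sum.inr p')
        = 0 := by
      refine Finset.sum_eq_zero fun p' _ => ?_
      rw [myAMInrInr, zero_div, zero_mul]
    have hT1 : ∑ b : V,
          (qTriangulation G q).adjMatrix ℝ (Sum.inr p) (Sum.inl b)
          / Real.sqrt (((qTriangulation G q).degree (Sum.inr p) : ℝ)
            * ((qTriangulation G q).degree (Sum.inl b) : ℝ)) * w (Sum.inl b)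
        = (1 / Real.sqrt (2*((q:ℝ)+1)))
          * ∑ i, G.incMatrix ℝ i (p.1 : Sym2 V) * v i / Real.sqrt (G.degree i) := by
      rw [Finset.mul_sum]
      refine Finset.sum_congr rfl fun b _ => ?_
      rw [hw1, hDr, hDl, myAMInrInl]
      have h1 : (2:ℝ) * (((q:ℝ)+1) * (G.degree b : ℝ))
          = (2*((q:ℝ)+1)) * (G.degree b : ℝ) := by ring
      rw [h1, Real.sqrt_mul ht.le]
      have hsb := (hsp b).ne'
      field_simp
      try ring
    rw [hT1, hT2, add_zero]
    have hfin : s / (2*((q:ℝ)+1)) * (Real.sqrt (2*((q:ℝ)+1)) / s)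
        = 1 / Real.sqrt (2*((q:ℝ)+1)) := by
      have h2s : Real.sqrt 2 ^ 2 = 2 := Real.sq_sqrt (by norm_num)
      have hq1s : Real.sqrt ((q:ℝ)+1) ^ 2 = (q:ℝ)+1 := Real.sq_sqrt hq1.le
      have hts : Real.sqrt (2*((q:ℝ)+1)) ^ 2 = 2*((q:ℝ)+1) := Real.sq_sqrt ht.le
      field_simp
      linear_combination hts
    rw [← mul_assoc, hfin]
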